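/- arXiv:1112.0781 — 5 statements merged into one kernel-verified Lean document; each statement's English description precedes it below -/
import Mathlib

section
/- Two coalgebra morphisms f', f'' : C → D₁ ⊗ D₂ are equal if and only if (ε_{D₁} ⊗ id) ∘ f' = (ε_{D₁} ⊗ id) ∘ f'' and (id ⊗ ε_{D₂}) ∘ f' = (id ⊗ ε_{D₂}) ∘ f''. -/
/-!
Write `p₁ : D₁ ⊗ D₂ → D₁`, `p₂ : D₁ ⊗ D₂ → D₂` for `d₁ ⊗ d₂ ↦ ε(d₂) d₁` and `d₁ ⊗ d₂ ↦ ε(d₁) d₂`.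
The counit axioms of `D₁` and `D₂` give `(p₁ ⊗ p₂) ∘ Δ = id` on `D₁ ⊗ D₂`, so a coalgebra morphism
`f : C → D₁ ⊗ D₂` is recovered from its two components as `f = (p₁ ∘ f ⊗ p₂ ∘ f) ∘ Δ_C`.
Up to the unitors `D₁ ⊗ K ≅ D₁` and `K ⊗ D₂ ≅ D₂`, `p₁` and `p₂` are `id ⊗ ε` and `ε ⊗ id`.
-/

open TensorProduct

namespace TensorProduct

open Coalgebra

variable {R A B C : Type*} [CommSemiring R] [AddCommMonoid A] [AddCommMonoid B] [AddCommMonoid C]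
  [Module R A] [Module R B] [Module R C]

variable (R A B) in
noncomputable def projLeft [CoalgebraStruct R B] : A ⊗[R] B →ₗ[R] A :=
  (TensorProduct.rid R A).toLinearMap ∘ₗ (counit : B →ₗ[R] R).lTensor A

variable (R A B) in
noncomputable def projRight [CoalgebraStruct R A] : A ⊗[R] B →ₗ[R] B :=
  (TensorProduct.lid R B).toLinearMap ∘ₗ (counit : A →ₗ[R] R).rTensor B

@[simp]
lemma projLeft_tmul [CoalgebraStruct R B] (a : A) (b : B) :
    projLeft R A B (a ⊗ₜ b) = counit (R := R) b • a := rfl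

@[simp]
lemma projRight_tmul [CoalgebraStruct R A] (a : A) (b : B) :
    projRight R A B (a ⊗ₜ b) = counit (R := R) a • b := rfl

lemma map_projLeft_projRight_comp_tensorTensorTensorComm [CoalgebraStruct R A]
    [CoalgebraStruct R B] :
    map (projLeft R A B) (projRight R A B) ∘ₗ (tensorTensorTensorComm R A A B B).toLinearMap =
      map (projLeft R A A) (projRight R B B) := by
  ext a a' b b'
  simp [smul_tmul', tmul_smul, smul_smul, mul_comm]

variable [Coalgebra R A] [Coalgebra R B] [Coalgebra R C]

lemma projLeft_comp_comul : projLeft R A A ∘ₗ comul = LinearMap.id := by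
  rw [projLeft, LinearMap.comp_assoc, lTensor_counit_comp_comul]
  ext; simp

lemma projRight_comp_comul : projRight R A A ∘ₗ comul = LinearMap.id := by
  rw [projRight, LinearMap.comp_assoc, rTensor_counit_comp_comul]
  ext; simp

lemma map_projLeft_projRight_comp_comul :
    map (projLeft R A B) (projRight R A B) ∘ₗ comul = LinearMap.id := by
  rw [comul_def, AlgebraTensorModule.tensorTensorTensorComm_eq, AlgebraTensorModule.map_eq,
    ← LinearMap.comp_assoc, map_projLeft_projRight_comp_tensorTensorTensorComm, ← map_comp,
    projLeft_comp_comul, projRight_comp_comul, map_id]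

theorem _root_.CoalgHom.eq_map_comp_comul (f : C →ₗc[R] A ⊗[R] B) :
    (f : C →ₗ[R] A ⊗[R] B) =
      map (projLeft R A B ∘ₗ f) (projRight R A B ∘ₗ f) ∘ₗ comul := by
  rw [map_comp, LinearMap.comp_assoc, CoalgHomClass.map_comp_comul, ← LinearMap.comp_assoc,
    map_projLeft_projRight_comp_comul, LinearMap.id_comp]

theorem _root_.CoalgHom.ext_of_projLeft_projRight {f g : C →ₗc[R] A ⊗[R] B}
    (hl : projLeft R A B ∘ₗ (f : C →ₗ[R] A ⊗[R] B) = projLeft R A B ∘ₗ (g : C →ₗ[R] A ⊗[R] B))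
    (hr : projRight R A B ∘ₗ (f : C →ₗ[R] A ⊗[R] B) = projRight R A B ∘ₗ (g : C →ₗ[R] A ⊗[R] B)) :
    f = g :=
  CoalgHom.coe_linearMap_injective <| by
    dsimp only
    rw [f.eq_map_comp_comul, g.eq_map_comp_comul, hl, hr]

end TensorProduct

/-- Two coalgebra morphisms `f', f'' : C → D₁ ⊗ D₂` are equal iff
`(ε ⊗ id) ∘ f' = (ε ⊗ id) ∘ f''` and `(id ⊗ ε) ∘ f' = (id ⊗ ε) ∘ f''`. -/
theorem stmt2 {K C D₁ D₂ : Type} [CommRing K]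
    [AddCommGroup C] [AddCommGroup D₁] [AddCommGroup D₂]
    [Module K C] [Module K D₁] [Module K D₂]
    [Coalgebra K C] [Coalgebra K D₁] [Coalgebra K D₂]
    (f' f'' : C →ₗc[K] D₁ ⊗[K] D₂) :
    f' = f'' ↔
      ((LinearMap.rTensor D₂ (Coalgebra.counit : D₁ →ₗ[K] K)) ∘ₗ
          (f' : C →ₗ[K] D₁ ⊗[K] D₂) =
        (LinearMap.rTensor D₂ (Coalgebra.counit : D₁ →ₗ[K] K)) ∘ₗ
          (f'' : C →ₗ[K] D₁ ⊗[K] D₂) ∧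
        (LinearMap.lTensor D₁ (Coalgebra.counit : D₂ →ₗ[K] K)) ∘ₗ
            (f' : C →ₗ[K] D₁ ⊗[K] D₂) =
          (LinearMap.lTensor D₁ (Coalgebra.counit : D₂ →ₗ[K] K)) ∘ₗ
            (f'' : C →ₗ[K] D₁ ⊗[K] D₂)) := by
  refine ⟨by rintro rfl; exact ⟨rfl, rfl⟩, fun ⟨hε₁, hε₂⟩ => ?_⟩
  apply CoalgHom.ext_of_projLeft_projRight
  · rw [projLeft, LinearMap.comp_assoc, LinearMap.comp_assoc, hε₂]
  · rw [projRight, LinearMap.comp_assoc, LinearMap.comp_assoc, hε₁]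
end

section
/- Let A and B be K-algebras and R : B ⊗ A → A ⊗ B a K-linear map satisfying: R ∘ (m_B ⊗ A) = (A ⊗ m_B) ∘ (R ⊗ B) ∘ (B ⊗ R); R ∘ (B ⊗ m_A) = (m_A ⊗ B) ∘ (A ⊗ R) ∘ (R ⊗ A); R(1_B ⊗ a) = a ⊗ 1_B for all a ∈ A; and R(b ⊗ 1_A) = 1_A ⊗ b for all b ∈ B. Then A ⊗ B equipped with multiplication (m_A ⊗ m_B) ∘ (A ⊗ R ⊗ B) and unit 1_A ⊗ 1_B is an associative unital K-algebra. -/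
/-!
Writing `a ⊗ b = (a ⊗ 1)(1 ⊗ b)`, the twisted product is left `A`-linear and right `B`-linear,
so associativity reduces to triples `(1 ⊗ b, y, a ⊗ 1)`. The two compatibility axioms of `R`
say exactly that `R (b b' ⊗ a) = (1 ⊗ b) · R (b' ⊗ a)` and `R (b ⊗ a a') = R (b ⊗ a) · (a' ⊗ 1)`,
and with these both bracketings of `(1 ⊗ b)(a' ⊗ b')(a ⊗ 1)` become `R (b ⊗ a') · R (b' ⊗ a)`.
-/

open TensorProduct

namespace TensorProduct

variable {K A B : Type*} [CommSemiring K] [Semiring A] [Semiring B] [Algebra K A] [Algebra K B]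

theorem lTensor_mul'_assoc_tmul (t : A ⊗[K] B) (b : B) :
    LinearMap.lTensor A (LinearMap.mul' K B) (TensorProduct.assoc K A B B (t ⊗ₜ b)) =
      LinearMap.lTensor A (LinearMap.mulRight K b) t := by
  induction t using TensorProduct.induction_on with
  | zero => simp only [zero_tmul, map_zero]
  | tmul u v => simp
  | add t₁ t₂ h₁ h₂ => simp only [add_tmul, map_add, h₁, h₂]

theorem rTensor_mul'_assoc_symm_tmul (a : A) (t : A ⊗[K] B) :
    LinearMap.rTensor B (LinearMap.mul' K A) ((TensorProduct.assoc K A A B).symm (a ⊗ₜ t)) =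
      LinearMap.rTensor B (LinearMap.mulLeft K a) t := by
  induction t using TensorProduct.induction_on with
  | zero => simp only [tmul_zero, map_zero]
  | tmul u v => simp
  | add t₁ t₂ h₁ h₂ => simp only [tmul_add, map_add, h₁, h₂]

end TensorProduct

namespace TwistingMap

open LinearMap

variable {K A B : Type*} [CommSemiring K] [Semiring A] [Semiring B] [Algebra K A] [Algebra K B]
  {R : B ⊗[K] A →ₗ[K] A ⊗[K] B} {μ : A ⊗[K] B →ₗ[K] A ⊗[K] B →ₗ[K] A ⊗[K] B}

variable (R μ) in
def IsTwistedMul : Prop :=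
  ∀ (a a' : A) (b b' : B),
    μ (a ⊗ₜ[K] b) (a' ⊗ₜ[K] b') = map (mulLeft K a) (mulRight K b') (R (b ⊗ₜ[K] a'))

theorem mul_rTensor_mulLeft (hμ : IsTwistedMul R μ) (a : A) (x y : A ⊗[K] B) :
    μ (rTensor B (mulLeft K a) x) y = rTensor B (mulLeft K a) (μ x y) := by
  induction x using TensorProduct.induction_on with
  | zero => simp only [map_zero, LinearMap.zero_apply]
  | add x₁ x₂ h₁ h₂ => simp only [map_add, LinearMap.add_apply, h₁, h₂]
  | tmul u v =>
    induction y using TensorProduct.induction_on with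
    | zero => simp only [map_zero]
    | add y₁ y₂ h₁ h₂ => simp only [map_add, h₁, h₂]
    | tmul u' v' => rw [rTensor_tmul, mulLeft_apply, hμ, hμ, rTensor_map, mulLeft_mul]

theorem mul_lTensor_mulRight (hμ : IsTwistedMul R μ) (b : B) (x y : A ⊗[K] B) :
    μ x (lTensor A (mulRight K b) y) = lTensor A (mulRight K b) (μ x y) := by
  induction x using TensorProduct.induction_on with
  | zero => simp only [map_zero, LinearMap.zero_apply]
  | add x₁ x₂ h₁ h₂ => simp only [map_add, LinearMap.add_apply, h₁, h₂]
  | tmul u v =>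
    induction y using TensorProduct.induction_on with
    | zero => simp only [map_zero]
    | add y₁ y₂ h₁ h₂ => simp only [map_add, h₁, h₂]
    | tmul u' v' => rw [lTensor_tmul, mulRight_apply, hμ, hμ, lTensor_map, mulRight_mul]

theorem one_tmul_mul_tmul (hμ : IsTwistedMul R μ) (a : A) (b b' : B) :
    μ (1 ⊗ₜ b) (a ⊗ₜ b') = lTensor A (mulRight K b') (R (b ⊗ₜ a)) := by
  rw [hμ, mulLeft_one]
  rfl

theorem tmul_mul_tmul_one (hμ : IsTwistedMul R μ) (a a' : A) (b : B) :
    μ (a ⊗ₜ b) (a' ⊗ₜ 1) = rTensor B (mulLeft K a) (R (b ⊗ₜ a')) := by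
  rw [hμ, mulRight_one]
  rfl

theorem apply_mul_tmul (hμ : IsTwistedMul R μ)
    (hR : R ∘ₗ rTensor A (mul' K B) =
      lTensor A (mul' K B) ∘ₗ (TensorProduct.assoc K A B B).toLinearMap ∘ₗ rTensor B R ∘ₗ
        (TensorProduct.assoc K B A B).symm.toLinearMap ∘ₗ lTensor B R ∘ₗ
          (TensorProduct.assoc K B B A).toLinearMap)
    (b b' : B) (a : A) : R ((b * b') ⊗ₜ a) = μ (1 ⊗ₜ b) (R (b' ⊗ₜ a)) := by
  have h := LinearMap.congr_fun hR ((b ⊗ₜ b') ⊗ₜ a)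
  simp only [comp_apply, rTensor_tmul, mul'_apply, LinearEquiv.coe_coe, assoc_tmul,
    lTensor_tmul] at h
  rw [h]
  induction R (b' ⊗ₜ a) using TensorProduct.induction_on with
  | zero => simp only [tmul_zero, map_zero]
  | add t₁ t₂ h₁ h₂ => simp only [tmul_add, map_add, h₁, h₂]
  | tmul u v =>
    rw [assoc_symm_tmul, rTensor_tmul, lTensor_mul'_assoc_tmul, one_tmul_mul_tmul hμ]

theorem apply_tmul_mul (hμ : IsTwistedMul R μ)
    (hR : R ∘ₗ lTensor B (mul' K A) =
      rTensor B (mul' K A) ∘ₗ (TensorProduct.assoc K A A B).symm.toLinearMap ∘ₗ lTensor A R ∘ₗ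
        (TensorProduct.assoc K A B A).toLinearMap ∘ₗ rTensor A R ∘ₗ
          (TensorProduct.assoc K B A A).symm.toLinearMap)
    (b : B) (a a' : A) : R (b ⊗ₜ (a * a')) = μ (R (b ⊗ₜ a)) (a' ⊗ₜ 1) := by
  have h := LinearMap.congr_fun hR (b ⊗ₜ (a ⊗ₜ a'))
  simp only [comp_apply, lTensor_tmul, mul'_apply, LinearEquiv.coe_coe, assoc_symm_tmul,
    rTensor_tmul] at h
  rw [h]
  induction R (b ⊗ₜ a) using TensorProduct.induction_on with
  | zero => simp only [zero_tmul, map_zero, LinearMap.zero_apply]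
  | add t₁ t₂ h₁ h₂ => simp only [add_tmul, map_add, LinearMap.add_apply, h₁, h₂]
  | tmul u v =>
    rw [assoc_tmul, lTensor_tmul, rTensor_mul'_assoc_symm_tmul, tmul_mul_tmul_one hμ]

theorem lTensor_mulRight_mul_tmul_one (hμ : IsTwistedMul R μ)
    (hR : ∀ (b b' : B) (a : A), R ((b * b') ⊗ₜ a) = μ (1 ⊗ₜ b) (R (b' ⊗ₜ a)))
    (b : B) (a : A) (t : A ⊗[K] B) :
    μ (lTensor A (mulRight K b) t) (a ⊗ₜ 1) = μ t (R (b ⊗ₜ a)) := by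
  induction t using TensorProduct.induction_on with
  | zero => simp only [map_zero, LinearMap.zero_apply]
  | add t₁ t₂ h₁ h₂ => simp only [map_add, LinearMap.add_apply, h₁, h₂]
  | tmul u v =>
    calc μ (u ⊗ₜ (v * b)) (a ⊗ₜ 1) = rTensor B (mulLeft K u) (μ (1 ⊗ₜ v) (R (b ⊗ₜ a))) := by
          rw [tmul_mul_tmul_one hμ, hR]
      _ = μ (u ⊗ₜ v) (R (b ⊗ₜ a)) := by
          rw [← mul_rTensor_mulLeft hμ, rTensor_tmul, mulLeft_apply, mul_one]

theorem one_tmul_mul_rTensor_mulLeft (hμ : IsTwistedMul R μ)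
    (hR : ∀ (b : B) (a a' : A), R (b ⊗ₜ (a * a')) = μ (R (b ⊗ₜ a)) (a' ⊗ₜ 1))
    (b : B) (a : A) (t : A ⊗[K] B) :
    μ (1 ⊗ₜ b) (rTensor B (mulLeft K a) t) = μ (R (b ⊗ₜ a)) t := by
  induction t using TensorProduct.induction_on with
  | zero => simp only [map_zero]
  | add t₁ t₂ h₁ h₂ => simp only [map_add, h₁, h₂]
  | tmul u v =>
    calc μ (1 ⊗ₜ b) ((a * u) ⊗ₜ v) = lTensor A (mulRight K v) (μ (R (b ⊗ₜ a)) (u ⊗ₜ 1)) := by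
          rw [one_tmul_mul_tmul hμ, hR]
      _ = μ (R (b ⊗ₜ a)) (u ⊗ₜ v) := by
          rw [← mul_lTensor_mulRight hμ, lTensor_tmul, mulRight_apply, one_mul]

theorem mul_assoc_one_tmul_tmul_one (hμ : IsTwistedMul R μ)
    (hR₁ : ∀ (b b' : B) (a : A), R ((b * b') ⊗ₜ a) = μ (1 ⊗ₜ b) (R (b' ⊗ₜ a)))
    (hR₂ : ∀ (b : B) (a a' : A), R (b ⊗ₜ (a * a')) = μ (R (b ⊗ₜ a)) (a' ⊗ₜ 1))
    (b : B) (a : A) (y : A ⊗[K] B) :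
    μ (μ (1 ⊗ₜ b) y) (a ⊗ₜ 1) = μ (1 ⊗ₜ b) (μ y (a ⊗ₜ 1)) := by
  induction y using TensorProduct.induction_on with
  | zero => simp only [map_zero, LinearMap.zero_apply]
  | add y₁ y₂ h₁ h₂ => simp only [map_add, LinearMap.add_apply, h₁, h₂]
  | tmul a' b' =>
    rw [one_tmul_mul_tmul hμ, lTensor_mulRight_mul_tmul_one hμ hR₁, tmul_mul_tmul_one hμ,
      one_tmul_mul_rTensor_mulLeft hμ hR₂]

theorem mul_assoc (hμ : IsTwistedMul R μ)
    (hR₁ : ∀ (b b' : B) (a : A), R ((b * b') ⊗ₜ a) = μ (1 ⊗ₜ b) (R (b' ⊗ₜ a)))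
    (hR₂ : ∀ (b : B) (a a' : A), R (b ⊗ₜ (a * a')) = μ (R (b ⊗ₜ a)) (a' ⊗ₜ 1))
    (x y z : A ⊗[K] B) : μ (μ x y) z = μ x (μ y z) := by
  have h_one_tmul (b : B) (z : A ⊗[K] B) : μ (μ (1 ⊗ₜ b) y) z = μ (1 ⊗ₜ b) (μ y z) := by
    induction z using TensorProduct.induction_on with
    | zero => simp only [map_zero]
    | add z₁ z₂ h₁ h₂ => simp only [map_add, h₁, h₂]
    | tmul a b' =>
      have hz : a ⊗ₜ[K] b' = lTensor A (mulRight K b') (a ⊗ₜ 1) := by simp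
      rw [hz, mul_lTensor_mulRight hμ, mul_lTensor_mulRight hμ, mul_lTensor_mulRight hμ,
        mul_assoc_one_tmul_tmul_one hμ hR₁ hR₂]
  induction x using TensorProduct.induction_on with
  | zero => simp only [map_zero, LinearMap.zero_apply]
  | add x₁ x₂ h₁ h₂ => simp only [map_add, LinearMap.add_apply, h₁, h₂]
  | tmul a b =>
    have hx : a ⊗ₜ[K] b = rTensor B (mulLeft K a) (1 ⊗ₜ b) := by simp
    rw [hx, mul_rTensor_mulLeft hμ, mul_rTensor_mulLeft hμ, mul_rTensor_mulLeft hμ,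
      h_one_tmul]

theorem one_mul (hμ : IsTwistedMul R μ) (hR : ∀ a : A, R (1 ⊗ₜ a) = a ⊗ₜ 1) (x : A ⊗[K] B) :
    μ (1 ⊗ₜ 1) x = x := by
  induction x using TensorProduct.induction_on with
  | zero => simp only [map_zero]
  | add x₁ x₂ h₁ h₂ => simp only [map_add, h₁, h₂]
  | tmul a b => simp [one_tmul_mul_tmul hμ, hR]

theorem mul_one (hμ : IsTwistedMul R μ) (hR : ∀ b : B, R (b ⊗ₜ 1) = 1 ⊗ₜ b) (x : A ⊗[K] B) :
    μ x (1 ⊗ₜ 1) = x := by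
  induction x using TensorProduct.induction_on with
  | zero => simp only [map_zero, LinearMap.zero_apply]
  | add x₁ x₂ h₁ h₂ => simp only [map_add, LinearMap.add_apply, h₁, h₂]
  | tmul a b => simp [tmul_mul_tmul_one hμ, hR]

end TwistingMap

/-- A twisting map `R : B ⊗ A → A ⊗ B` between two `K`-algebras makes `A ⊗ B` into an
associative unital algebra with multiplication `(m_A ⊗ m_B) ∘ (A ⊗ R ⊗ B)` and unit
`1_A ⊗ 1_B`. -/
theorem stmt3 {K A B : Type} [CommRing K] [Ring A] [Ring B] [Algebra K A] [Algebra K B]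
    (R : B ⊗[K] A →ₗ[K] A ⊗[K] B)
    -- R ∘ (m_B ⊗ A) = (A ⊗ m_B) ∘ (R ⊗ B) ∘ (B ⊗ R)
    (hfm1 : R ∘ₗ LinearMap.rTensor A (LinearMap.mul' K B) =
      LinearMap.lTensor A (LinearMap.mul' K B) ∘ₗ
        (TensorProduct.assoc K A B B).toLinearMap ∘ₗ
          LinearMap.rTensor B R ∘ₗ
            (TensorProduct.assoc K B A B).symm.toLinearMap ∘ₗ
              LinearMap.lTensor B R ∘ₗ (TensorProduct.assoc K B B A).toLinearMap)
    -- R ∘ (B ⊗ m_A) = (m_A ⊗ B) ∘ (A ⊗ R) ∘ (R ⊗ A)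
    (hfm2 : R ∘ₗ LinearMap.lTensor B (LinearMap.mul' K A) =
      LinearMap.rTensor B (LinearMap.mul' K A) ∘ₗ
        (TensorProduct.assoc K A A B).symm.toLinearMap ∘ₗ
          LinearMap.lTensor A R ∘ₗ
            (TensorProduct.assoc K A B A).toLinearMap ∘ₗ
              LinearMap.rTensor A R ∘ₗ (TensorProduct.assoc K B A A).symm.toLinearMap)
    (hfm3 : ∀ a : A, R ((1 : B) ⊗ₜ[K] a) = a ⊗ₜ[K] (1 : B))
    (hfm4 : ∀ b : B, R (b ⊗ₜ[K] (1 : A)) = (1 : A) ⊗ₜ[K] b)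
    -- μ is the multiplication (m_A ⊗ m_B) ∘ (A ⊗ R ⊗ B)
    (μ : A ⊗[K] B →ₗ[K] A ⊗[K] B →ₗ[K] A ⊗[K] B)
    (hμ : ∀ (a a' : A) (b b' : B),
      μ (a ⊗ₜ[K] b) (a' ⊗ₜ[K] b') =
        TensorProduct.map (LinearMap.mulLeft K a) (LinearMap.mulRight K b') (R (b ⊗ₜ[K] a'))) :
    (∀ x y z : A ⊗[K] B, μ (μ x y) z = μ x (μ y z)) ∧
    (∀ x : A ⊗[K] B, μ ((1 : A) ⊗ₜ[K] (1 : B)) x = x ∧ μ x ((1 : A) ⊗ₜ[K] (1 : B)) = x) :=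
  ⟨TwistingMap.mul_assoc hμ (TwistingMap.apply_mul_tmul hμ hfm1)
      (TwistingMap.apply_tmul_mul hμ hfm2),
    fun x => ⟨TwistingMap.one_mul hμ hfm3 x, TwistingMap.mul_one hμ hfm4 x⟩⟩
end

section
/- Let 𝐀 and 𝐁 be ordinary (Set-enriched) small categories with the same object set S, together with a function |···| : S³ → S and maps ▷ sending (f : y → x in B, g : z → y in A) to f▷g : |xyz| → x in A, and ◁ sending (f, g) to f◁g : z → |xyz| in B, satisfying the matched-pair axioms: (f∘f')▷g = f▷(f'▷g) with |xy|yzt|| = |xzt|; (f∘f')◁g = (f◁(f'▷g)) ∘ (f'◁g); f◁(g∘g') = (f◁g)◁g' with ||xyz|zt| = |xyt|; f▷(g∘g') = (f▷g) ∘ ((f◁g)▷g'); 1ₓ▷g = g and 1ₓ◁g = 1 with |xxy| = y; f▷1 = 1 and f◁1 = f with |xyy| = x. Then there is a category A ⊗_R B with object set S, hom-sets Hom(y, x) = ⨿_{u∈S} Hom_A(u, x) × Hom_B(y, u), identities (1ₓ^A, 1ₓ^B), and composition (g, f) ∘ (g', f') = (g ∘ (f▷g'), (f◁g') ∘ f'),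 and this composition is associative and unital. -/
/-- A matched pair of ordinary (Set-enriched) small categories `𝐀`, `𝐁` with common object
set `S`.  `Ahom x y` denotes the set of morphisms `y → x` in `𝐀` (the paper's `ₓA_y`), and
similarly for `𝐁`.  `act f g = f▷g : |x y z| → x` in `𝐀` and `coact f g = f◁g : z → |x y z|`
in `𝐁`, for `f : y → x` in `𝐁` and `g : z → y` in `𝐀`. -/
structure MatchedPairCats where
  S : Type
  Ahom : S → S → Type
  Bhom : S → S → Type
  idA : ∀ x, Ahom x x
  compA : ∀ {x y z}, Ahom x y → Ahom y z → Ahom x z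
  idB : ∀ x, Bhom x x
  compB : ∀ {x y z}, Bhom x y → Bhom y z → Bhom x z
  -- 𝐀 is a category
  assocA : ∀ {x y z t} (g : Ahom x y) (h : Ahom y z) (k : Ahom z t),
    compA (compA g h) k = compA g (compA h k)
  idA_comp : ∀ {x y} (g : Ahom x y), compA (idA x) g = g
  comp_idA : ∀ {x y} (g : Ahom x y), compA g (idA y) = g
  -- 𝐁 is a category
  assocB : ∀ {x y z t} (f : Bhom x y) (h : Bhom y z) (k : Bhom z t),
    compB (compB f h) k = compB f (compB h k)
  idB_comp : ∀ {x y} (f : Bhom x y), compB (idB x) f = f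
  comp_idB : ∀ {x y} (f : Bhom x y), compB f (idB y) = f
  -- the function |···| : S³ → S and the actions ▷, ◁
  bar : S → S → S → S
  act : ∀ {x y z}, Bhom x y → Ahom y z → Ahom x (bar x y z)
  coact : ∀ {x y z}, Bhom x y → Ahom y z → Bhom (bar x y z) z
  -- |xy|yzt|| = |xzt| whenever the relevant morphisms exist, etc.
  bar1 : ∀ {x y z t}, Bhom x y → Bhom y z → Ahom z t → bar x y (bar y z t) = bar x z t
  bar2 : ∀ {x y z t}, Bhom x y → Ahom y z → Ahom z t → bar (bar x y z) z t = bar x y t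
  bar3 : ∀ {x y}, Ahom x y → bar x x y = y
  bar4 : ∀ {x y}, Bhom x y → bar x y y = x
  -- (f∘f')▷g = f▷(f'▷g)
  ax1 : ∀ {x y z t} (f : Bhom x y) (f' : Bhom y z) (g : Ahom z t),
    HEq (act (compB f f') g) (act f (act f' g))
  -- (f∘f')◁g = (f◁(f'▷g)) ∘ (f'◁g)
  ax2 : ∀ {x y z t} (f : Bhom x y) (f' : Bhom y z) (g : Ahom z t),
    HEq (coact (compB f f') g) (compB (coact f (act f' g)) (coact f' g))
  -- f▷(g∘g') = (f▷g) ∘ ((f◁g)▷g')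
  ax3 : ∀ {x y z t} (f : Bhom x y) (g : Ahom y z) (g' : Ahom z t),
    HEq (act f (compA g g')) (compA (act f g) (act (coact f g) g'))
  -- f◁(g∘g') = (f◁g)◁g'
  ax4 : ∀ {x y z t} (f : Bhom x y) (g : Ahom y z) (g' : Ahom z t),
    HEq (coact f (compA g g')) (coact (coact f g) g')
  -- 1ₓ▷g = g and 1ₓ◁g = 1
  ax5 : ∀ {x y} (g : Ahom x y), HEq (act (idB x) g) g
  ax6 : ∀ {x y} (g : Ahom x y), HEq (coact (idB x) g) (idB y)
  -- f▷1 = 1 and f◁1 = f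
  ax7 : ∀ {x y} (f : Bhom x y), HEq (act f (idA y)) (idA x)
  ax8 : ∀ {x y} (f : Bhom x y), HEq (coact f (idA y)) f

namespace MatchedPairCats

variable (M : MatchedPairCats)

/-- Hom-sets of the twisted tensor product category `A ⊗_R B`:
`Hom(y, x) = ⨿_{u ∈ S} Hom_A(u, x) × Hom_B(y, u)`. -/
def Hom (x y : M.S) : Type := Σ u : M.S, M.Ahom x u × M.Bhom u y

/-- Composition in `A ⊗_R B`: `(g, f) ∘ (g', f') = (g ∘ (f▷g'), (f◁g') ∘ f')`. -/
def comp {x y z : M.S} : M.Hom x y → M.Hom y z → M.Hom x z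
  | ⟨u, g, f⟩, ⟨v, g', f'⟩ =>
      ⟨M.bar u y v, M.compA g (M.act f g'), M.compB (M.coact f g') f'⟩

/-- Identities of `A ⊗_R B`: `(1ₓ^A, 1ₓ^B)`. -/
def ident (x : M.S) : M.Hom x x := ⟨x, M.idA x, M.idB x⟩

end MatchedPairCats

/-!
Componentwise, associativity is the interchange law of `▷` (resp. `◁`) with composition in `𝐁`,
then associativity in `𝐀` (resp. `𝐁`), then the interchange law with composition in `𝐀`; the
unit laws are the unit axioms of the actions followed by those of `𝐀` and `𝐁`. The equations on
`|···|` only serve to identify the hom-sets in which the two sides live, which is why the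
argument is carried out with `HEq`.
-/

namespace MatchedPairCats

variable {M : MatchedPairCats}

theorem Hom.ext_heq {x y u v : M.S} (h : u = v)
    {g : M.Ahom x u} {g' : M.Ahom x v} {f : M.Bhom u y} {f' : M.Bhom v y}
    (hg : HEq g g') (hf : HEq f f') :
    (⟨u, g, f⟩ : M.Hom x y) = ⟨v, g', f'⟩ := by
  subst h
  rw [eq_of_heq hg, eq_of_heq hf]

theorem compA_congr_heq {x y y' z z' : M.S} (hy : y = y') (hz : z = z')
    {a : M.Ahom x y} {a' : M.Ahom x y'} {b : M.Ahom y z} {b' : M.Ahom y' z'}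
    (ha : HEq a a') (hb : HEq b b') : HEq (M.compA a b) (M.compA a' b') := by
  subst hy hz
  rw [eq_of_heq ha, eq_of_heq hb]

theorem compB_congr_heq {x x' y y' z : M.S} (hx : x = x') (hy : y = y')
    {a : M.Bhom x y} {a' : M.Bhom x' y'} {b : M.Bhom y z} {b' : M.Bhom y' z}
    (ha : HEq a a') (hb : HEq b b') : HEq (M.compB a b) (M.compB a' b') := by
  subst hx hy
  rw [eq_of_heq ha, eq_of_heq hb]

theorem comp_assoc {x y z t : M.S} (p : M.Hom x y) (q : M.Hom y z) (r : M.Hom z t) :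
    M.comp (M.comp p q) r = M.comp p (M.comp q r) := by
  obtain ⟨u, g, f⟩ := p
  obtain ⟨v, g', f'⟩ := q
  obtain ⟨w, g'', f''⟩ := r
  -- Both sides are compared with the middle object `|(|u y v|) v (|v z w|)|`.
  have hleft : M.bar (M.bar u y v) v (M.bar v z w) = M.bar (M.bar u y v) z w :=
    M.bar1 (M.coact f g') f' g''
  have hright : M.bar (M.bar u y v) v (M.bar v z w) = M.bar u y (M.bar v z w) :=
    M.bar2 f g' (M.act f' g'')
  refine Hom.ext_heq (hleft ▸ hright) ?_ ?_
  · exact (compA_congr_heq rfl hleft.symm HEq.rfl (M.ax1 _ _ _)).trans <|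
      (heq_of_eq (M.assocA _ _ _)).trans <|
      compA_congr_heq rfl hright HEq.rfl (M.ax3 _ _ _).symm
  · exact (compB_congr_heq hleft.symm rfl (M.ax2 _ _ _) HEq.rfl).trans <|
      (heq_of_eq (M.assocB _ _ _)).trans <|
      compB_congr_heq hright rfl (M.ax4 _ _ _).symm HEq.rfl

theorem ident_comp {x y : M.S} (p : M.Hom x y) : M.comp (M.ident x) p = p := by
  obtain ⟨u, g, f⟩ := p
  refine Hom.ext_heq (M.bar3 g) ?_ ?_
  · exact (compA_congr_heq rfl (M.bar3 g) HEq.rfl (M.ax5 g)).trans (heq_of_eq (M.idA_comp g))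
  · exact (compB_congr_heq (M.bar3 g) rfl (M.ax6 g) HEq.rfl).trans (heq_of_eq (M.idB_comp f))

theorem comp_ident {x y : M.S} (p : M.Hom x y) : M.comp p (M.ident y) = p := by
  obtain ⟨u, g, f⟩ := p
  refine Hom.ext_heq (M.bar4 f) ?_ ?_
  · exact (compA_congr_heq rfl (M.bar4 f) HEq.rfl (M.ax7 f)).trans (heq_of_eq (M.comp_idA g))
  · exact (compB_congr_heq (M.bar4 f) rfl (M.ax8 f) HEq.rfl).trans (heq_of_eq (M.comp_idB f))

end MatchedPairCats

/-- The twisted tensor product `A ⊗_R B` of a matched pair of `Set`-categories is a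
category: its composition is associative and unital. -/
theorem stmt11 (M : MatchedPairCats) :
    (∀ {x y z t : M.S} (p : M.Hom x y) (q : M.Hom y z) (r : M.Hom z t),
      M.comp (M.comp p q) r = M.comp p (M.comp q r)) ∧
    (∀ {x y : M.S} (p : M.Hom x y),
      M.comp (M.ident x) p = p ∧ M.comp p (M.ident y) = p) :=
  ⟨MatchedPairCats.comp_assoc,
    fun p => ⟨MatchedPairCats.ident_comp p, MatchedPairCats.comp_ident p⟩⟩
end

section
/- Let 𝐀 and 𝐁 be thin categories with object set S, T = {(x,y,z) ∈ S³ : Hom_B(y,x) ≠ ∅ and Hom_A(z,y) ≠ ∅}, and |···| : S³ → S a function satisfying the conditions (i)–(v): (i) (y,z,t) ∈ T and (x,y,|yzt|) ∈ T imply |xy|yzt|| = |xzt|; (ii) (x,y,z) ∈ T and (|xyz|,z,t) ∈ T imply ||xyz|zt| = |xyt|; (iii) (x,x,y) ∈ T implies |xxy| = y; (iv) (x,y,y) ∈ T implies |xyy| = x; (v) (x,y,z) ∈ T implies Hom_A(|xyz|, x) ≠ ∅ and Hom_B(z, |xyz|) ≠ ∅. Then the data with objects S, hom-sets Hom(y,x)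 = {u ∈ S : Hom_A(u,x) ≠ ∅ and Hom_B(y,u) ≠ ∅}, identity x ∈ Hom(x,x), and composition u ∘ v = |uyv| for u ∈ Hom(y,x), v ∈ Hom(z,y), form a category. -/
/-- Twisted tensor product of two thin categories.  A thin category with object set `S` is
a preorder; `A x u` means "there is a morphism `u → x` in `𝐀`" and `B u y` means "there is
a morphism `y → u` in `𝐁`".  `T = {(x,y,z) : Hom_B(y,x) ≠ ∅ ∧ Hom_A(z,y) ≠ ∅}`.  Given
`|···| : S³ → S` satisfying (i)–(v), the data with hom-sets
`Hom(y,x) = {u : Hom_A(u,x) ≠ ∅ ∧ Hom_B(y,u) ≠ ∅}`, identities `x ∈ Hom(x,x)`, and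
composition `u ∘ v = |uyv|` form a category. -/
theorem stmt15 {S : Type} (A B : S → S → Prop)
    -- 𝐀 and 𝐁 are thin categories (preorders): identities and composition
    (hArefl : ∀ x, A x x) (hAtrans : ∀ {x y z}, A x y → A y z → A x z)
    (hBrefl : ∀ x, B x x) (hBtrans : ∀ {x y z}, B x y → B y z → B x z)
    (bar : S → S → S → S)
    -- (i) (y,z,t) ∈ T and (x,y,|yzt|) ∈ T imply |xy|yzt|| = |xzt|
    (h1 : ∀ x y z t, (B y z ∧ A z t) → (B x y ∧ A y (bar y z t)) →
      bar x y (bar y z t) = bar x z t)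
    -- (ii) (x,y,z) ∈ T and (|xyz|,z,t) ∈ T imply ||xyz|zt| = |xyt|
    (h2 : ∀ x y z t, (B x y ∧ A y z) → (B (bar x y z) z ∧ A z t) →
      bar (bar x y z) z t = bar x y t)
    -- (iii) (x,x,y) ∈ T implies |xxy| = y
    (h3 : ∀ x y, (B x x ∧ A x y) → bar x x y = y)
    -- (iv) (x,y,y) ∈ T implies |xyy| = x
    (h4 : ∀ x y, (B x y ∧ A y y) → bar x y y = x)
    -- (v) (x,y,z) ∈ T implies Hom_A(|xyz|,x) ≠ ∅ and Hom_B(z,|xyz|) ≠ ∅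
    (h5 : ∀ x y z, (B x y ∧ A y z) → A x (bar x y z) ∧ B (bar x y z) z) :
    -- the composite of u ∈ Hom(y,x) and v ∈ Hom(z,y) lies in Hom(z,x)
    (∀ x y z u v, (A x u ∧ B u y) → (A y v ∧ B v z) →
      A x (bar u y v) ∧ B (bar u y v) z) ∧
    -- identities: x ∈ Hom(x,x), and unit laws
    (∀ x, A x x ∧ B x x) ∧
    (∀ x y u, (A x u ∧ B u y) → bar x x u = u ∧ bar u y y = u) ∧
    -- associativity
    (∀ x y z t u v w, (A x u ∧ B u y) → (A y v ∧ B v z) → (A z w ∧ B w t) →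
      bar (bar u y v) z w = bar u y (bar v z w)) := by
  refine ⟨?_, fun x => ⟨hArefl x, hBrefl x⟩, ?_, ?_⟩
  · rintro x y z u v ⟨hxu, huy⟩ ⟨hyv, hvz⟩
    obtain ⟨hu, hz⟩ := h5 u y v ⟨huy, hyv⟩
    exact ⟨hAtrans hxu hu, hBtrans hz hvz⟩
  · rintro x y u ⟨hxu, huy⟩
    exact ⟨h3 x u ⟨hBrefl x, hxu⟩, h4 u y ⟨huy, hArefl y⟩⟩
  · rintro x y z t u v w ⟨-, huy⟩ ⟨hyv, hvz⟩ ⟨hzw, -⟩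
    -- (i) and (ii) both apply to the mixed bracket `||uyv| v |vzw||`, which links the two sides.
    have huv : B (bar u y v) v := (h5 u y v ⟨huy, hyv⟩).2
    have hvw : A v (bar v z w) := (h5 v z w ⟨hvz, hzw⟩).1
    calc bar (bar u y v) z w = bar (bar u y v) v (bar v z w) :=
          (h1 _ v z w ⟨hvz, hzw⟩ ⟨huv, hvw⟩).symm
      _ = bar u y (bar v z w) := h2 u y v _ ⟨huy, hyv⟩ ⟨huv, hvw⟩
end

section
/- Let (A, B, ▷, ◁, |···|) be a matched pair of groupoids (a matched pair of Set-categories in which A and B are groupoids). Then every morphism of the bicrossed product category A ⋈ B is invertible; explicitly, for g ∈ Hom_A(u, x) and f ∈ Hom_B(y, u), the morphism (g, f) has inverse (f⁻¹▷g⁻¹, (f◁(f⁻¹▷g⁻¹))⁻¹). -/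
/-!
Write `g' = f⁻¹ ▷ g⁻¹` and `h = f ◁ g'`. Since `f ▷ g' = (f ∘ f⁻¹) ▷ g⁻¹ = g⁻¹`, the product
`(g, f) ∘ (g', h⁻¹) = (g ∘ g⁻¹, h ∘ h⁻¹)` is the identity. For the other product, expanding
`f ▷ (g' ∘ g'⁻¹) = f ▷ 1 = 1` and `f ◁ (g' ∘ g'⁻¹) = f ◁ 1 = f` gives `h ▷ g'⁻¹ = g` and
`h ◁ g'⁻¹ = f`; hence `(g', h⁻¹) ∘ (g, f)` has components `g' ∘ (h⁻¹ ▷ (h ▷ g'⁻¹)) = 1` and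
`(h⁻¹ ◁ (h ▷ g'⁻¹)) ∘ (h ◁ g'⁻¹) = (h⁻¹ ∘ h) ◁ g'⁻¹ = 1`.
All these identities hold only up to the equalities of objects `|x y z|` given by the axioms,
hence are stated as `HEq`.
-/

/-- A matched pair of groupoids `𝐀`, `𝐁` with common object set `S`.  `Ahom x y` denotes
the set of morphisms `y → x` in `𝐀` (the paper's `ₓA_y`), similarly for `𝐁`;
`act f g = f▷g : |x y z| → x` in `𝐀` and `coact f g = f◁g : z → |x y z|` in `𝐁`,
for `f : y → x` in `𝐁` and `g : z → y` in `𝐀`. -/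
structure MatchedPairGroupoids where
  S : Type
  Ahom : S → S → Type
  Bhom : S → S → Type
  idA : ∀ x, Ahom x x
  compA : ∀ {x y z}, Ahom x y → Ahom y z → Ahom x z
  idB : ∀ x, Bhom x x
  compB : ∀ {x y z}, Bhom x y → Bhom y z → Bhom x z
  -- 𝐀 is a category
  assocA : ∀ {x y z t} (g : Ahom x y) (h : Ahom y z) (k : Ahom z t),
    compA (compA g h) k = compA g (compA h k)
  idA_comp : ∀ {x y} (g : Ahom x y), compA (idA x) g = g
  comp_idA : ∀ {x y} (g : Ahom x y), compA g (idA y) = g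
  -- 𝐁 is a category
  assocB : ∀ {x y z t} (f : Bhom x y) (h : Bhom y z) (k : Bhom z t),
    compB (compB f h) k = compB f (compB h k)
  idB_comp : ∀ {x y} (f : Bhom x y), compB (idB x) f = f
  comp_idB : ∀ {x y} (f : Bhom x y), compB f (idB y) = f
  -- 𝐀 and 𝐁 are groupoids
  invA : ∀ {x y}, Ahom x y → Ahom y x
  compA_invA : ∀ {x y} (g : Ahom x y), compA g (invA g) = idA x
  invA_compA : ∀ {x y} (g : Ahom x y), compA (invA g) g = idA y
  invB : ∀ {x y}, Bhom x y → Bhom y x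
  compB_invB : ∀ {x y} (f : Bhom x y), compB f (invB f) = idB x
  invB_compB : ∀ {x y} (f : Bhom x y), compB (invB f) f = idB y
  -- the function |···| : S³ → S and the actions ▷, ◁
  bar : S → S → S → S
  act : ∀ {x y z}, Bhom x y → Ahom y z → Ahom x (bar x y z)
  coact : ∀ {x y z}, Bhom x y → Ahom y z → Bhom (bar x y z) z
  -- conditions on |···|
  bar1 : ∀ {x y z t}, Bhom x y → Bhom y z → Ahom z t → bar x y (bar y z t) = bar x z t
  bar2 : ∀ {x y z t}, Bhom x y → Ahom y z → Ahom z t → bar (bar x y z) z t = bar x y t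
  bar3 : ∀ {x y}, Ahom x y → bar x x y = y
  bar4 : ∀ {x y}, Bhom x y → bar x y y = x
  -- (f∘f')▷g = f▷(f'▷g)
  ax1 : ∀ {x y z t} (f : Bhom x y) (f' : Bhom y z) (g : Ahom z t),
    HEq (act (compB f f') g) (act f (act f' g))
  -- (f∘f')◁g = (f◁(f'▷g)) ∘ (f'◁g)
  ax2 : ∀ {x y z t} (f : Bhom x y) (f' : Bhom y z) (g : Ahom z t),
    HEq (coact (compB f f') g) (compB (coact f (act f' g)) (coact f' g))
  -- f▷(g∘g') = (f▷g) ∘ ((f◁g)▷g')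
  ax3 : ∀ {x y z t} (f : Bhom x y) (g : Ahom y z) (g' : Ahom z t),
    HEq (act f (compA g g')) (compA (act f g) (act (coact f g) g'))
  -- f◁(g∘g') = (f◁g)◁g'
  ax4 : ∀ {x y z t} (f : Bhom x y) (g : Ahom y z) (g' : Ahom z t),
    HEq (coact f (compA g g')) (coact (coact f g) g')
  -- 1▷g = g and 1◁g = 1
  ax5 : ∀ {x y} (g : Ahom x y), HEq (act (idB x) g) g
  ax6 : ∀ {x y} (g : Ahom x y), HEq (coact (idB x) g) (idB y)
  -- f▷1 = 1 and f◁1 = f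
  ax7 : ∀ {x y} (f : Bhom x y), HEq (act f (idA y)) (idA x)
  ax8 : ∀ {x y} (f : Bhom x y), HEq (coact f (idA y)) f

namespace MatchedPairGroupoids

variable (M : MatchedPairGroupoids)

/-- Hom-sets of the bicrossed product `A ⋈ B`:
`Hom(y, x) = ⨿_{u ∈ S} Hom_A(u, x) × Hom_B(y, u)`. -/
def Hom (x y : M.S) : Type := Σ u : M.S, M.Ahom x u × M.Bhom u y

/-- Composition in `A ⋈ B`: `(g, f) ∘ (g', f') = (g ∘ (f▷g'), (f◁g') ∘ f')`. -/
def comp {x y z : M.S} : M.Hom x y → M.Hom y z → M.Hom x z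
  | ⟨u, g, f⟩, ⟨v, g', f'⟩ =>
      ⟨M.bar u y v, M.compA g (M.act f g'), M.compB (M.coact f g') f'⟩

/-- Identities of `A ⋈ B`. -/
def ident (x : M.S) : M.Hom x x := ⟨x, M.idA x, M.idB x⟩

end MatchedPairGroupoids

namespace MatchedPairGroupoids

variable (M : MatchedPairGroupoids)

theorem heq_invA_of_compA_heq_idA {x w t : M.S} (a : M.Ahom x w) (b : M.Ahom w t) (ht : t = x)
    (hab : HEq (M.compA a b) (M.idA x)) : HEq b (M.invA a) := by
  subst ht
  refine heq_of_eq ?_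
  calc b = M.compA (M.compA (M.invA a) a) b := by rw [M.invA_compA, M.idA_comp]
    _ = M.invA a := by rw [M.assocA, eq_of_heq hab, M.comp_idA]

theorem invA_invA {x y : M.S} (g : M.Ahom x y) : M.invA (M.invA g) = g :=
  (eq_of_heq (M.heq_invA_of_compA_heq_idA (M.invA g) g rfl (heq_of_eq (M.invA_compA g)))).symm

theorem bar_bar_invB {x y z : M.S} (f : M.Bhom x y) (k : M.Ahom x z) :
    M.bar x y (M.bar y x z) = z :=
  (M.bar1 f (M.invB f) k).trans (M.bar3 k)

theorem bar_bar_invA {x y z : M.S} (f : M.Bhom x y) (k : M.Ahom y z) :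
    M.bar (M.bar x y z) z y = x :=
  (M.bar2 f k (M.invA k)).trans (M.bar4 f)

theorem act_act_invB {x y z : M.S} (f : M.Bhom x y) (k : M.Ahom x z) :
    HEq (M.act f (M.act (M.invB f) k)) k :=
  (M.ax1 f (M.invB f) k).symm.trans (by rw [M.compB_invB]; exact M.ax5 k)

theorem act_invB_act {x y z : M.S} (f : M.Bhom x y) (k : M.Ahom y z) :
    HEq (M.act (M.invB f) (M.act f k)) k :=
  (M.ax1 (M.invB f) f k).symm.trans (by rw [M.invB_compB]; exact M.ax5 k)

theorem coact_coact_invA {x y z : M.S} (f : M.Bhom x y) (g : M.Ahom y z) :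
    HEq (M.coact (M.coact f g) (M.invA g)) f :=
  (M.ax4 f g (M.invA g)).symm.trans (by rw [M.compA_invA]; exact M.ax8 f)

theorem act_coact_invA {x y z : M.S} (f : M.Bhom x y) (g : M.Ahom y z) :
    HEq (M.act (M.coact f g) (M.invA g)) (M.invA (M.act f g)) := by
  refine M.heq_invA_of_compA_heq_idA _ _ (M.bar_bar_invA f g) ?_
  exact (M.ax3 f g (M.invA g)).symm.trans (by rw [M.compA_invA]; exact M.ax7 f)

theorem compB_coact_invB_act_coact {x y z : M.S} (f : M.Bhom x y) (k : M.Ahom y z) :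
    HEq (M.compB (M.coact (M.invB f) (M.act f k)) (M.coact f k)) (M.idB z) :=
  (M.ax2 (M.invB f) f k).symm.trans (by rw [M.invB_compB]; exact M.ax6 k)

theorem mk_eq_ident {x u : M.S} {g : M.Ahom x u} {f : M.Bhom u x} (hu : u = x)
    (hg : HEq g (M.idA x)) (hf : HEq f (M.idB x)) : (⟨u, g, f⟩ : M.Hom x x) = M.ident x := by
  subst hu
  rw [eq_of_heq hg, eq_of_heq hf]
  rfl

end MatchedPairGroupoids

/-- The bicrossed product of a matched pair of groupoids is a groupoid: every morphism
`(g, f)` is invertible, with inverse `(f⁻¹▷g⁻¹, (f◁(f⁻¹▷g⁻¹))⁻¹)`. -/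
theorem stmt19 (M : MatchedPairGroupoids) :
    ∀ {x y : M.S} (u : M.S) (g : M.Ahom x u) (f : M.Bhom u y),
      ∃ (v : M.S) (g' : M.Ahom y v) (f' : M.Bhom v x),
        M.comp ⟨u, g, f⟩ ⟨v, g', f'⟩ = M.ident x ∧
        M.comp ⟨v, g', f'⟩ ⟨u, g, f⟩ = M.ident y ∧
        v = M.bar y u x ∧
        HEq g' (M.act (M.invB f) (M.invA g)) ∧
        HEq f' (M.invB (M.coact f (M.act (M.invB f) (M.invA g)))) := by
  intro x y u g f
  set v := M.bar y u x
  set g' : M.Ahom y v := M.act (M.invB f) (M.invA g)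
  set h := M.coact f g'
  -- `grind` transports the `HEq` congruences below along these equalities of objects.
  have hx : M.bar u y v = x := M.bar_bar_invB f (M.invA g)
  have hy : M.bar v x u = y := M.bar_bar_invA (M.invB f) (M.invA g)
  have hu : M.bar (M.bar u y v) v y = u := M.bar_bar_invA f g'
  obtain ⟨f', hf'⟩ : ∃ f' : M.Bhom v x, HEq f' (M.invB h) := by
    rw [← hx]; exact ⟨_, HEq.rfl⟩
  have hfg' : HEq (M.act f g') (M.invA g) := M.act_act_invB f (M.invA g)
  have hhg' : HEq (M.act h (M.invA g')) g := by
    grind [M.act_coact_invA f g', M.invA_invA g]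
  have hf'g : HEq (M.act f' g) (M.invA g') := by
    grind [M.act_invB_act h (M.invA g')]
  refine ⟨v, g', f', M.mk_eq_ident hx ?_ ?_, M.mk_eq_ident hy ?_ ?_, rfl, HEq.rfl, hf'⟩
  · grind [M.compA_invA g]
  · grind [M.compB_invB h]
  · grind [M.compA_invA g']
  · grind [M.compB_coact_invB_act_coact h (M.invA g'), M.coact_coact_invA f g']
end
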